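/- Under the continuity assumption on r and P^0, for every t ≥ 0 the law of the N-agent environment state converges to the law of the mean-field environment state uniformly over all mean-field policies: sup_{π∈Π} ‖L(x^{0,N}_t) − L(x^0_t)‖₁ → 0 as N → ∞, where x^{0,N}_t is the environment state of the N-agent system under the policy tuple π^N(π) and x^0_t is the mean-field environment state under π. -/

import Mathlib

/-!
The proof is by induction on `t`. One step of the `N`-agent environment chain differs from the
mean-field step only in that the transition `P⁰(x⁰, 𝔾ᴺ)` is evaluated at the random empirical
state-action distribution instead of at `G(μ₀, h)`. For i.i.d. samples from any law `w` on
`X × U`, each frequency has variance at most `1/N`, so `E[‖𝔾ᴺ - w‖²] ≤ |X × U| / N` uniformly in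
`w`. Since `P⁰(x⁰, ·)` is uniformly continuous on the compact simplex with `L¹`-oscillation at most
`2`, a Chebyshev-type bound `‖P⁰(x⁰, G') - P⁰(x⁰, G)‖₁ ≤ ε + (2/δ²) ‖G' - G‖²` makes the one-step
error small uniformly in `h` and `x⁰`. The `L¹` errors then accumulate additively along the
chain, because mixing with a stochastic kernel does not increase `L¹` distances.
-/

open Finset Filter Topology

section MFC

variable {X U X0 : Type*} [Fintype X] [Fintype U] [Fintype X0]

/-- The state-action distribution `G(μ,h)(x,u) = h(x)(u)·μ(x)` induced by a state
distribution `μ` and a decision rule `h ∈ 𝓗 = {h : X → 𝒫(U)}`. -/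
noncomputable def jointG (μ : ↥(stdSimplex ℝ X)) (h : X → ↥(stdSimplex ℝ U)) :
    ↥(stdSimplex ℝ (X × U)) :=
  ⟨fun p => (h p.1).1 p.2 * μ.1 p.1,
   ⟨fun p => mul_nonneg ((h p.1).2.1 p.2) (μ.2.1 p.1), by
    calc ∑ p : X × U, (h p.1).1 p.2 * μ.1 p.1
        = ∑ x : X, ∑ u : U, (h x).1 u * μ.1 x := by rw [Fintype.sum_prod_type]
      _ = ∑ x : X, (∑ u : U, (h x).1 u) * μ.1 x := by
          simp [Finset.sum_mul]
      _ = 1 := by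
          simp only [fun x : X => (h x).2.2, one_mul]
          exact μ.2.2⟩⟩

/-- The (deterministic) empirical state-action distribution of the `N+1` sampled
state-action pairs `s i ∈ X × U`. -/
noncomputable def empDist [DecidableEq X] [DecidableEq U] (N : ℕ) (s : Fin (N + 1) → X × U) :
    ↥(stdSimplex ℝ (X × U)) :=
  ⟨fun p => (∑ i, if s i = p then (1 : ℝ) else 0) / (N + 1),
   ⟨fun p => div_nonneg (Finset.sum_nonneg fun i _ => by positivity) (by positivity), by
    rw [← Finset.sum_div, Finset.sum_comm]
    simp only [Finset.sum_ite_eq, Finset.mem_univ, if_true, Finset.sum_const,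
      Finset.card_univ, Fintype.card_fin, nsmul_eq_mul, mul_one]
    rw [Nat.cast_add, Nat.cast_one, div_self (by positivity)]⟩⟩

/-- The probability that the `N+1` agents, with states drawn i.i.d. from `μ0` and actions
drawn conditionally independently from the decision rules `d i`, sample exactly the
state-action pairs `s i`. -/
noncomputable def sampleWeight (N : ℕ) (μ0 : ↥(stdSimplex ℝ X))
    (d : Fin (N + 1) → X → ↥(stdSimplex ℝ U)) (s : Fin (N + 1) → X × U) : ℝ :=
  ∏ i, μ0.1 (s i).1 * (d i (s i).1).1 (s i).2

/-- The expectation `E[f(𝔾^N)]` of a function `f` of the random empirical state-action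
distribution `𝔾^N ~ 𝒢^N(μ0, (d¹,…,d^{N+1}))`. -/
noncomputable def empExp [DecidableEq X] [DecidableEq U] (N : ℕ) (μ0 : ↥(stdSimplex ℝ X))
    (d : Fin (N + 1) → X → ↥(stdSimplex ℝ U))
    (f : ↥(stdSimplex ℝ (X × U)) → ℝ) : ℝ :=
  ∑ s : Fin (N + 1) → X × U, sampleWeight N μ0 d s * f (empDist N s)

/-- The law of the environment state `x^{0,N}_t` of the `(N+1)`-agent system under the
policy tuple `πv`, with agent states resampled i.i.d. from `μ0` at every step. -/
noncomputable def envLawN [DecidableEq X] [DecidableEq U] (N : ℕ) (μ0 : ↥(stdSimplex ℝ X))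
    (μ00 : ↥(stdSimplex ℝ X0))
    (P0 : X0 → ↥(stdSimplex ℝ (X × U)) → ↥(stdSimplex ℝ X0))
    (πv : Fin (N + 1) → ℕ → X0 → X → ↥(stdSimplex ℝ U)) : ℕ → X0 → ℝ
  | 0 => fun y => μ00.1 y
  | t + 1 => fun y => ∑ x0 : X0, envLawN N μ0 μ00 P0 πv t x0 *
      empExp N μ0 (fun i => πv i t x0) (fun G => (P0 x0 G).1 y)

/-- The `(N+1)`-agent objective `J^N(π¹,…,π^{N+1}) = E[∑ₜ γᵗ r(x^{0,N}_t, 𝔾^N_t)]`. -/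
noncomputable def JN [DecidableEq X] [DecidableEq U] (N : ℕ) (μ0 : ↥(stdSimplex ℝ X))
    (μ00 : ↥(stdSimplex ℝ X0))
    (P0 : X0 → ↥(stdSimplex ℝ (X × U)) → ↥(stdSimplex ℝ X0))
    (r : X0 → ↥(stdSimplex ℝ (X × U)) → ℝ) (γ : ℝ)
    (πv : Fin (N + 1) → ℕ → X0 → X → ↥(stdSimplex ℝ U)) : ℝ :=
  ∑' t : ℕ, γ ^ t * ∑ x0 : X0, envLawN N μ0 μ00 P0 πv t x0 *
      empExp N μ0 (fun i => πv i t x0) (fun G => r x0 G)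

/-- The law of the mean-field environment state `x^0_t` under the mean-field policy `π`. -/
noncomputable def envLawMF (μ0 : ↥(stdSimplex ℝ X)) (μ00 : ↥(stdSimplex ℝ X0))
    (P0 : X0 → ↥(stdSimplex ℝ (X × U)) → ↥(stdSimplex ℝ X0))
    (π : ℕ → X0 → X → ↥(stdSimplex ℝ U)) : ℕ → X0 → ℝ
  | 0 => fun y => μ00.1 y
  | t + 1 => fun y => ∑ x0 : X0, envLawMF μ0 μ00 P0 π t x0 *
      (P0 x0 (jointG μ0 (π t x0))).1 y

/-- The mean-field objective `J(π) = E[∑ₜ γᵗ r(x^0_t, G(μ0, π_t(x^0_t)))]`. -/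
noncomputable def JMF (μ0 : ↥(stdSimplex ℝ X)) (μ00 : ↥(stdSimplex ℝ X0))
    (P0 : X0 → ↥(stdSimplex ℝ (X × U)) → ↥(stdSimplex ℝ X0))
    (r : X0 → ↥(stdSimplex ℝ (X × U)) → ℝ) (γ : ℝ)
    (π : ℕ → X0 → X → ↥(stdSimplex ℝ U)) : ℝ :=
  ∑' t : ℕ, γ ^ t * ∑ x0 : X0, envLawMF μ0 μ00 P0 π t x0 * r x0 (jointG μ0 (π t x0))

end MFC


section IIDSums

variable {V : Type*} [Fintype V] {n : ℕ} (w : V → ℝ)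

theorem sum_pi_prod_mul_prod (f : Fin n → V → ℝ) :
    ∑ s : Fin n → V, (∏ i, w (s i)) * ∏ i, f i (s i) = ∏ i, ∑ v, w v * f i v := by
  simp_rw [Fintype.prod_sum, Finset.prod_mul_distrib]

variable {w}

theorem sum_pi_prod_mul_sum_sq (hw : ∑ v, w v = 1) {g : V → ℝ} (hg : ∑ v, w v * g v = 0) :
    ∑ s : Fin n → V, (∏ i, w (s i)) * (∑ i, g (s i)) ^ 2 = n * ∑ v, w v * g v ^ 2 := by
  have pair (j k : Fin n) : ∑ s : Fin n → V, (∏ i, w (s i)) * (g (s j) * g (s k)) =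
      if j = k then ∑ v, w v * g v ^ 2 else 0 := by
    have := sum_pi_prod_mul_prod w fun i v =>
      (if i = j then g v else 1) * (if i = k then g v else 1)
    simp only [Finset.prod_mul_distrib, Finset.prod_ite_eq', Finset.mem_univ, if_true] at this
    rw [this]
    split_ifs with hjk
    · subst hjk
      rw [Finset.prod_eq_single j (fun i _ hij => by simp [hij, hw]) (by simp)]
      simp [sq]
    · exact Finset.prod_eq_zero (Finset.mem_univ j) (by simp [hjk, hg])
  calc ∑ s : Fin n → V, (∏ i, w (s i)) * (∑ i, g (s i)) ^ 2
      = ∑ j, ∑ k, ∑ s : Fin n → V, (∏ i, w (s i)) * (g (s j) * g (s k)) := by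
        simp_rw [sq, Finset.sum_mul_sum, Finset.mul_sum]
        rw [Finset.sum_comm]
        exact Finset.sum_congr rfl fun _ _ => Finset.sum_comm
    _ = n * ∑ v, w v * g v ^ 2 := by simp [pair]

theorem sum_pi_prod_mul_sq_freq_sub_le [DecidableEq V] (hw₀ : ∀ v, 0 ≤ w v)
    (hw : ∑ v, w v = 1) (hn : n ≠ 0) (p : V) :
    ∑ s : Fin n → V, (∏ i, w (s i)) * ((∑ i, if s i = p then (1 : ℝ) else 0) / n - w p) ^ 2
      ≤ 1 / n := by
  set g : V → ℝ := fun v => (if v = p then 1 else 0) - w p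
  have hg : ∑ v, w v * g v = 0 := by simp [g, mul_sub, ← Finset.sum_mul, hw]
  have hg_sq (v : V) : g v ^ 2 ≤ 1 := by
    have hwp : w p ≤ 1 := hw ▸ Finset.single_le_sum (fun v _ => hw₀ v) (Finset.mem_univ p)
    rw [sq_le_one_iff_abs_le_one, abs_le]
    simp only [g]
    split_ifs <;> constructor <;> linarith [hw₀ p]
  have hfreq (s : Fin n → V) :
      (∑ i, if s i = p then (1 : ℝ) else 0) / n - w p = (∑ i, g (s i)) / n := by
    simp only [g, Finset.sum_sub_distrib, Finset.sum_boole, Finset.sum_const, Finset.card_univ,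
      Fintype.card_fin, nsmul_eq_mul]
    field_simp
  calc ∑ s : Fin n → V, (∏ i, w (s i)) * ((∑ i, if s i = p then (1 : ℝ) else 0) / n - w p) ^ 2
      = (∑ s : Fin n → V, (∏ i, w (s i)) * (∑ i, g (s i)) ^ 2) / n ^ 2 := by
        simp_rw [hfreq, div_pow, Finset.sum_div, mul_div_assoc]
    _ = (∑ v, w v * g v ^ 2) / n := by
        rw [sum_pi_prod_mul_sum_sq hw hg]
        field_simp
    _ ≤ 1 / n := by
        gcongr
        calc ∑ v, w v * g v ^ 2 ≤ ∑ v, w v := Finset.sum_le_sum fun v _ =>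
                mul_le_of_le_one_right (hw₀ v) (hg_sq v)
          _ = 1 := hw

end IIDSums

section Sampling

variable {X U : Type*} [Fintype X] [Fintype U] {N : ℕ} {μ0 : ↥(stdSimplex ℝ X)}
  {d : Fin (N + 1) → X → ↥(stdSimplex ℝ U)}

theorem sampleWeight_nonneg (s : Fin (N + 1) → X × U) : 0 ≤ sampleWeight N μ0 d s :=
  Finset.prod_nonneg fun i _ => mul_nonneg (μ0.2.1 _) ((d i _).2.1 _)

theorem sum_sampleWeight : ∑ s, sampleWeight N μ0 d s = 1 := by
  simp only [sampleWeight]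
  rw [← Fintype.prod_sum fun i (p : X × U) => μ0.1 p.1 * (d i p.1).1 p.2]
  refine Finset.prod_eq_one fun i _ => ?_
  rw [← (jointG μ0 (d i)).2.2]
  exact Finset.sum_congr rfl fun _ _ => mul_comm _ _

theorem sampleWeight_const (h : X → ↥(stdSimplex ℝ U)) (s : Fin (N + 1) → X × U) :
    sampleWeight N μ0 (fun _ => h) s = ∏ i, (jointG μ0 h).1 (s i) :=
  Finset.prod_congr rfl fun _ _ => mul_comm _ _

variable [DecidableEq X] [DecidableEq U] {f g : ↥(stdSimplex ℝ (X × U)) → ℝ}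

theorem empExp_const (c : ℝ) : empExp N μ0 d (fun _ => c) = c := by
  rw [empExp, ← Finset.sum_mul, sum_sampleWeight, one_mul]

theorem empExp_add : empExp N μ0 d (fun G => f G + g G) = empExp N μ0 d f + empExp N μ0 d g := by
  simp only [empExp, mul_add, Finset.sum_add_distrib]

theorem empExp_sub : empExp N μ0 d (fun G => f G - g G) = empExp N μ0 d f - empExp N μ0 d g := by
  simp only [empExp, mul_sub, Finset.sum_sub_distrib]

theorem empExp_const_mul (c : ℝ) : empExp N μ0 d (fun G => c * f G) = c * empExp N μ0 d f := by
  simp only [empExp, Finset.mul_sum]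
  exact Finset.sum_congr rfl fun _ _ => mul_left_comm _ _ _

theorem empExp_sum {Y : Type*} [Fintype Y] (F : ↥(stdSimplex ℝ (X × U)) → Y → ℝ) :
    empExp N μ0 d (fun G => ∑ y, F G y) = ∑ y, empExp N μ0 d (fun G => F G y) := by
  simp only [empExp, Finset.mul_sum]
  exact Finset.sum_comm

theorem empExp_nonneg (hf : ∀ G, 0 ≤ f G) : 0 ≤ empExp N μ0 d f :=
  Finset.sum_nonneg fun s _ => mul_nonneg (sampleWeight_nonneg s) (hf _)

theorem empExp_mono (hfg : ∀ G, f G ≤ g G) : empExp N μ0 d f ≤ empExp N μ0 d g :=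
  Finset.sum_le_sum fun s _ => mul_le_mul_of_nonneg_left (hfg _) (sampleWeight_nonneg s)

theorem abs_empExp_le : |empExp N μ0 d f| ≤ empExp N μ0 d (fun G => |f G|) := by
  refine (Finset.abs_sum_le_sum_abs _ _).trans_eq (Finset.sum_congr rfl fun s _ => ?_)
  rw [abs_mul, abs_of_nonneg (sampleWeight_nonneg s)]

end Sampling

theorem dist_sq_le_sum_sq {ι : Type*} [Fintype ι] (f g : ι → ℝ) :
    dist f g ^ 2 ≤ ∑ i, (f i - g i) ^ 2 := by
  have hdist : dist f g ≤ √(∑ i, (f i - g i) ^ 2) :=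
    (dist_pi_le_iff (Real.sqrt_nonneg _)).2 fun i => by
      rw [Real.dist_eq]
      exact Real.abs_le_sqrt (Finset.single_le_sum (f := fun i => (f i - g i) ^ 2)
        (fun _ _ => sq_nonneg _) (Finset.mem_univ i))
  calc dist f g ^ 2 ≤ √(∑ i, (f i - g i) ^ 2) ^ 2 := by gcongr
    _ = ∑ i, (f i - g i) ^ 2 := Real.sq_sqrt (Finset.sum_nonneg fun _ _ => sq_nonneg _)

section Concentration

variable {X U : Type*} [Fintype X] [Fintype U] [DecidableEq X] [DecidableEq U]

theorem empExp_dist_jointG_sq_le (N : ℕ) (μ0 : ↥(stdSimplex ℝ X)) (h : X → ↥(stdSimplex ℝ U)) :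
    empExp N μ0 (fun _ => h) (fun G => dist G (jointG μ0 h) ^ 2)
      ≤ Fintype.card (X × U) / (N + 1) := by
  set J := jointG μ0 h
  have hfreq (p : X × U) :
      empExp N μ0 (fun _ => h) (fun G => (G.1 p - J.1 p) ^ 2) ≤ 1 / (N + 1) := by
    have := sum_pi_prod_mul_sq_freq_sub_le J.2.1 J.2.2 N.succ_ne_zero p
    push_cast at this
    simpa only [empExp, sampleWeight_const, empDist] using this
  calc empExp N μ0 (fun _ => h) (fun G => dist G J ^ 2)
      ≤ empExp N μ0 (fun _ => h) (fun G => ∑ p, (G.1 p - J.1 p) ^ 2) :=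
        empExp_mono fun G => dist_sq_le_sum_sq G.1 J.1
    _ = ∑ p, empExp N μ0 (fun _ => h) (fun G => (G.1 p - J.1 p) ^ 2) := empExp_sum _
    _ ≤ ∑ _p : X × U, 1 / ((N : ℝ) + 1) := Finset.sum_le_sum fun p _ => hfreq p
    _ = Fintype.card (X × U) / (N + 1) := by
        rw [Finset.sum_const, Finset.card_univ, nsmul_eq_mul, mul_one_div]

end Concentration

theorem sum_abs_sub_le_two {ι : Type*} [Fintype ι] {p q : ι → ℝ} (hp : p ∈ stdSimplex ℝ ι)
    (hq : q ∈ stdSimplex ℝ ι) : ∑ i, |p i - q i| ≤ 2 := by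
  calc ∑ i, |p i - q i| ≤ ∑ i, (p i + q i) := Finset.sum_le_sum fun i _ =>
        (abs_sub _ _).trans_eq (by rw [abs_of_nonneg (hp.1 i), abs_of_nonneg (hq.1 i)])
    _ = 2 := by rw [Finset.sum_add_distrib, hp.2, hq.2]; norm_num

theorem exists_pos_forall_sum_abs_sub_le_of_continuous {α ι κ : Type*} [PseudoMetricSpace α]
    [CompactSpace α] [Fintype ι] [Fintype κ] {F : ι → α → κ → ℝ} (hF : ∀ i, Continuous (F i))
    {ε : ℝ} (hε : 0 < ε) :
    ∃ δ > 0, ∀ a b, dist a b < δ → ∀ i, ∑ k, |F i a k - F i b k| ≤ ε := by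
  obtain ⟨ε', hε', hcard⟩ := exists_pos_mul_lt hε (Fintype.card κ)
  obtain ⟨δ, hδ, hunif⟩ := Metric.uniformContinuous_iff.1
    (CompactSpace.uniformContinuous_of_continuous (continuous_pi hF)) ε' hε'
  refine ⟨δ, hδ, fun a b hab i => ?_⟩
  have hcoord (k : κ) : |F i a k - F i b k| ≤ ε' := by
    rw [← Real.dist_eq]
    calc dist (F i a k) (F i b k) ≤ dist (F i a) (F i b) := dist_le_pi_dist _ _ k
      _ ≤ dist (fun i => F i a) (fun i => F i b) :=
        dist_le_pi_dist (fun i => F i a) (fun i => F i b) i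
      _ ≤ ε' := (hunif hab).le
  calc ∑ k, |F i a k - F i b k| ≤ ∑ _k : κ, ε' := Finset.sum_le_sum fun k _ => hcoord k
    _ = Fintype.card κ * ε' := by rw [Finset.sum_const, Finset.card_univ, nsmul_eq_mul]
    _ ≤ ε := hcard.le

theorem exists_forall_sum_abs_sub_le_add_mul_dist_sq {α X0 : Type*} [PseudoMetricSpace α]
    [CompactSpace α] [Fintype X0] {P0 : X0 → α → ↥(stdSimplex ℝ X0)}
    (hP0 : ∀ x0, Continuous (P0 x0)) {ε : ℝ} (hε : 0 < ε) :
    ∃ C ≥ 0, ∀ x0 a b, ∑ y, |(P0 x0 a).1 y - (P0 x0 b).1 y| ≤ ε + C * dist a b ^ 2 := by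
  obtain ⟨δ, hδ, hclose⟩ := exists_pos_forall_sum_abs_sub_le_of_continuous
    (fun x0 => continuous_subtype_val.comp (hP0 x0)) hε
  refine ⟨2 / δ ^ 2, by positivity, fun x0 a b => ?_⟩
  have hquad : 0 ≤ 2 / δ ^ 2 * dist a b ^ 2 := by positivity
  by_cases hab : dist a b < δ
  · have : ∑ y, |(P0 x0 a).1 y - (P0 x0 b).1 y| ≤ ε := hclose a b hab x0
    linarith
  · calc ∑ y, |(P0 x0 a).1 y - (P0 x0 b).1 y| ≤ 2 := sum_abs_sub_le_two (P0 x0 a).2 (P0 x0 b).2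
      _ ≤ 2 / δ ^ 2 * dist a b ^ 2 := by
        rw [div_mul_eq_mul_div, le_div_iff₀ (by positivity)]
        nlinarith [not_lt.1 hab]
      _ ≤ ε + 2 / δ ^ 2 * dist a b ^ 2 := by linarith

section Transition

variable {X U X0 : Type*} [Fintype X] [Fintype U] [Fintype X0] [DecidableEq X] [DecidableEq U]

theorem eventually_forall_sum_abs_empExp_transition_sub_le (μ0 : ↥(stdSimplex ℝ X))
    {P0 : X0 → ↥(stdSimplex ℝ (X × U)) → ↥(stdSimplex ℝ X0)} (hP0 : ∀ x0, Continuous (P0 x0))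
    {ε : ℝ} (hε : 0 < ε) :
    ∀ᶠ N in atTop, ∀ (h : X → ↥(stdSimplex ℝ U)) (x0 : X0),
      ∑ y, |empExp N μ0 (fun _ => h) (fun G => (P0 x0 G).1 y) - (P0 x0 (jointG μ0 h)).1 y|
        ≤ ε := by
  obtain ⟨C, hC, htransition⟩ := exists_forall_sum_abs_sub_le_add_mul_dist_sq hP0 (half_pos hε)
  have hrate : Tendsto (fun N : ℕ => C * (Fintype.card (X × U) / ((N : ℝ) + 1))) atTop (𝓝 0) := by
    convert (tendsto_one_div_add_atTop_nhds_zero_nat (𝕜 := ℝ)).const_mul (C * Fintype.card (X × U))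
      using 1
    · ext N
      ring
    · rw [mul_zero]
  filter_upwards [hrate.eventually_lt_const (half_pos hε)] with N hN h x0
  set J := jointG μ0 h
  calc ∑ y, |empExp N μ0 (fun _ => h) (fun G => (P0 x0 G).1 y) - (P0 x0 J).1 y|
      = ∑ y, |empExp N μ0 (fun _ => h) (fun G => (P0 x0 G).1 y - (P0 x0 J).1 y)| := by
        simp only [empExp_sub, empExp_const]
    _ ≤ ∑ y, empExp N μ0 (fun _ => h) (fun G => |(P0 x0 G).1 y - (P0 x0 J).1 y|) :=
        Finset.sum_le_sum fun y _ => abs_empExp_le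
    _ = empExp N μ0 (fun _ => h) (fun G => ∑ y, |(P0 x0 G).1 y - (P0 x0 J).1 y|) :=
        (empExp_sum _).symm
    _ ≤ empExp N μ0 (fun _ => h) (fun G => ε / 2 + C * dist G J ^ 2) :=
        empExp_mono fun G => htransition x0 G J
    _ = ε / 2 + C * empExp N μ0 (fun _ => h) (fun G => dist G J ^ 2) := by
        rw [empExp_add, empExp_const, empExp_const_mul]
    _ ≤ ε / 2 + C * (Fintype.card (X × U) / ((N : ℝ) + 1)) :=
        add_le_add_right (mul_le_mul_of_nonneg_left (empExp_dist_jointG_sq_le N μ0 h) hC) _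
    _ ≤ ε := by linarith

end Transition

theorem sum_abs_sum_mul_sub_sum_mul_le {ι κ : Type*} [Fintype ι] [Fintype κ] {ν m : ι → ℝ}
    {K L : ι → κ → ℝ} (hK₀ : ∀ x y, 0 ≤ K x y) (hK₁ : ∀ x, ∑ y, K x y = 1) (hm : ∀ x, 0 ≤ m x) :
    ∑ y, |∑ x, ν x * K x y - ∑ x, m x * L x y|
      ≤ ∑ x, |ν x - m x| + ∑ x, m x * ∑ y, |K x y - L x y| := by
  have hsplit (y : κ) : ∑ x, ν x * K x y - ∑ x, m x * L x y
      = ∑ x, ((ν x - m x) * K x y + m x * (K x y - L x y)) := by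
    rw [← Finset.sum_sub_distrib]
    exact Finset.sum_congr rfl fun _ _ => by ring
  calc ∑ y, |∑ x, ν x * K x y - ∑ x, m x * L x y|
      ≤ ∑ y, ∑ x, (|ν x - m x| * K x y + m x * |K x y - L x y|) :=
        Finset.sum_le_sum fun y _ => by
          rw [hsplit]
          refine (Finset.abs_sum_le_sum_abs _ _).trans (Finset.sum_le_sum fun x _ => ?_)
          refine (abs_add_le _ _).trans_eq ?_
          rw [abs_mul, abs_mul, abs_of_nonneg (hK₀ x y), abs_of_nonneg (hm x)]
    _ = ∑ x, |ν x - m x| + ∑ x, m x * ∑ y, |K x y - L x y| := by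
        rw [Finset.sum_comm]
        simp only [Finset.sum_add_distrib, ← Finset.mul_sum, hK₁, mul_one]

section EnvironmentLaw

variable {X U X0 : Type*} [Fintype X] [Fintype U] [Fintype X0] (μ0 : ↥(stdSimplex ℝ X))
  (μ00 : ↥(stdSimplex ℝ X0)) {P0 : X0 → ↥(stdSimplex ℝ (X × U)) → ↥(stdSimplex ℝ X0)}

theorem envLawMF_nonneg (π : ℕ → X0 → X → ↥(stdSimplex ℝ U)) (t : ℕ) (y : X0) :
    0 ≤ envLawMF μ0 μ00 P0 π t y := by
  induction t generalizing y with
  | zero => exact μ00.2.1 y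
  | succ t ih => exact Finset.sum_nonneg fun x0 _ => mul_nonneg (ih x0) ((P0 x0 _).2.1 y)

theorem sum_envLawMF (π : ℕ → X0 → X → ↥(stdSimplex ℝ U)) (t : ℕ) :
    ∑ y, envLawMF μ0 μ00 P0 π t y = 1 := by
  induction t with
  | zero => exact μ00.2.2
  | succ t ih =>
    simp only [envLawMF]
    rw [Finset.sum_comm]
    simpa only [← Finset.mul_sum, (P0 _ _).2.2, mul_one] using ih

variable [DecidableEq X] [DecidableEq U]

theorem eventually_forall_sum_abs_envLawN_sub_envLawMF_le (hP0 : ∀ x0, Continuous (P0 x0))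
    (t : ℕ) {ε : ℝ} (hε : 0 < ε) :
    ∀ᶠ N in atTop, ∀ π : ℕ → X0 → X → ↥(stdSimplex ℝ U),
      ∑ y, |envLawN N μ0 μ00 P0 (fun _ => π) t y - envLawMF μ0 μ00 P0 π t y| ≤ ε := by
  induction t generalizing ε with
  | zero => exact Eventually.of_forall fun N π => by simpa [envLawN, envLawMF] using hε.le
  | succ t ih =>
    filter_upwards [ih (half_pos hε),
      eventually_forall_sum_abs_empExp_transition_sub_le μ0 hP0 (half_pos hε)] with N hlaw hstep π
    have hrow (x0 : X0) :
        ∑ y, empExp N μ0 (fun _ => π t x0) (fun G => (P0 x0 G).1 y) = 1 := by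
      rw [← empExp_sum, ← empExp_const (N := N) (μ0 := μ0) (d := fun _ => π t x0) 1]
      simp only [(P0 x0 _).2.2]
    calc ∑ y, |envLawN N μ0 μ00 P0 (fun _ => π) (t + 1) y - envLawMF μ0 μ00 P0 π (t + 1) y|
        ≤ ∑ x0, |envLawN N μ0 μ00 P0 (fun _ => π) t x0 - envLawMF μ0 μ00 P0 π t x0|
          + ∑ x0, envLawMF μ0 μ00 P0 π t x0 * ∑ y,
            |empExp N μ0 (fun _ => π t x0) (fun G => (P0 x0 G).1 y)
              - (P0 x0 (jointG μ0 (π t x0))).1 y| :=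
          sum_abs_sum_mul_sub_sum_mul_le (fun _ _ => empExp_nonneg fun _ => (P0 _ _).2.1 _) hrow
            (envLawMF_nonneg μ0 μ00 π t)
      _ ≤ ε / 2 + ∑ x0, envLawMF μ0 μ00 P0 π t x0 * (ε / 2) :=
          add_le_add (hlaw π) (Finset.sum_le_sum fun x0 _ =>
            mul_le_mul_of_nonneg_left (hstep _ x0) (envLawMF_nonneg μ0 μ00 π t x0))
      _ = ε := by rw [← Finset.sum_mul, sum_envLawMF, one_mul, add_halves]

end EnvironmentLaw

theorem environment_law_tendsto_mean_field_law_general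
    {X U X0 : Type*} [Fintype X] [Fintype U] [Fintype X0]
    [DecidableEq X] [DecidableEq U]
    (μ0 : ↥(stdSimplex ℝ X)) (μ00 : ↥(stdSimplex ℝ X0))
    (P0 : X0 → ↥(stdSimplex ℝ (X × U)) → ↥(stdSimplex ℝ X0))
    -- continuity of P⁰ in the state-action distribution
    (hP0 : ∀ x0, Continuous (P0 x0))
    (t : ℕ) :
    Tendsto (fun N : ℕ =>
        ⨆ π : ℕ → X0 → X → ↥(stdSimplex ℝ U),
          ∑ y : X0, |envLawN N μ0 μ00 P0 (fun _ => π) t y - envLawMF μ0 μ00 P0 π t y|)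
      atTop (𝓝 0) := by
  refine Metric.tendsto_nhds.2 fun ε hε => ?_
  filter_upwards [eventually_forall_sum_abs_envLawN_sub_envLawMF_le μ0 μ00 hP0 t (half_pos hε)]
    with N hN
  have hsup_nonneg : 0 ≤ ⨆ π : ℕ → X0 → X → ↥(stdSimplex ℝ U),
      ∑ y : X0, |envLawN N μ0 μ00 P0 (fun _ => π) t y - envLawMF μ0 μ00 P0 π t y| :=
    Real.iSup_nonneg fun _ => Finset.sum_nonneg fun _ _ => abs_nonneg _
  rw [Real.dist_0_eq_abs, abs_of_nonneg hsup_nonneg]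
  exact (Real.iSup_le hN (half_pos hε).le).trans_lt (half_lt_self hε)

/-- Under the continuity assumption on `r` and `P⁰`, for every `t ≥ 0` the law
of the `N`-agent environment state converges to the law of the mean-field environment state
uniformly over all mean-field policies:
`sup_{π∈Π} ‖L(x^{0,N}_t) − L(x^0_t)‖₁ → 0` as `N → ∞`, where `x^{0,N}_t` is the environment
state of the `N`-agent system under the policy tuple `π^N(π)` and `x^0_t` is the mean-field
environment state under `π`.
(The number of agents is written as `N + 1`; the limit `N → ∞` is unaffected.) -/
theorem environment_law_tendsto_mean_field_law
    {X U X0 : Type*} [Fintype X] [Fintype U] [Fintype X0]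
    [Nonempty X] [Nonempty U] [Nonempty X0] [DecidableEq X] [DecidableEq U]
    (μ0 : ↥(stdSimplex ℝ X)) (μ00 : ↥(stdSimplex ℝ X0))
    (P0 : X0 → ↥(stdSimplex ℝ (X × U)) → ↥(stdSimplex ℝ X0))
    -- continuity of P⁰ in the state-action distribution
    (hP0 : ∀ x0, Continuous (P0 x0))
    (t : ℕ) :
    Tendsto (fun N : ℕ =>
        ⨆ π : ℕ → X0 → X → ↥(stdSimplex ℝ U),
          ∑ y : X0, |envLawN N μ0 μ00 P0 (fun _ => π) t y - envLawMF μ0 μ00 P0 π t y|)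
      atTop (𝓝 0) :=
  environment_law_tendsto_mean_field_law_general μ0 μ00 P0 hP0 t
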